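/- Let A, B : ℝ → Matrix (Fin p) (Fin p) ℂ be continuous and let Φ_A, Φ_B be fundamental matrices of y' = A(t)y and y' = B(t)y respectively. Then for all t, s, ξ ∈ ℝ: (i) Ψ_A(t,s) − Ψ_B(t,s) = ∫_s^t Ψ_B(t,r)·(A(r) − B(r))·Ψ_A(r,s) dr; and (ii) Ψ_A(t+ξ, s+ξ) − Ψ_B(t,s) = ∫_s^t Ψ_B(t,r)·(A(r+ξ) − B(r))·Ψ_A(r+ξ, s+ξ) dr. -/

import Mathlib

/-! `Φ_B(r)⁻¹ Φ_A(r)` has derivative `Φ_B(r)⁻¹ (A(r) - B(r)) Φ_A(r)`, so integrating from `s` to `t`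
and multiplying by `Φ_B(t)` on the left and by `Φ_A(s)⁻¹` on the right gives (i); this works in
any Banach algebra. Identity (ii) is (i) for the shifted system `A(· + ξ)`, of which `Φ_A(· + ξ)` is
a fundamental matrix. -/

open MeasureTheory Filter Topology

attribute [local instance] Matrix.linftyOpNormedAddCommGroup Matrix.linftyOpNormedRing
  Matrix.linftyOpNormedAlgebra

/-- `Φ` is a fundamental matrix of `y' = A(t) y`: it is differentiable with
`Φ'(t) = A(t) Φ(t)` and `Φ(t)` invertible for every `t`. -/
def IsFundamentalMatrix {p : ℕ} (A Φ : ℝ → Matrix (Fin p) (Fin p) ℂ) : Prop :=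
  (∀ t : ℝ, HasDerivAt Φ (A t * Φ t) t) ∧ ∀ t : ℝ, IsUnit (Φ t)

open scoped Ring

section RingInverse

variable {𝕜 R : Type*} [NontriviallyNormedField 𝕜] [NormedRing R] [NormedAlgebra 𝕜 R]
  [HasSummableGeomSeries R]

theorem HasDerivAt.ringInverse {f : 𝕜 → R} {f' : R} {x : 𝕜}
    (hf : HasDerivAt f f' x) (hx : IsUnit (f x)) :
    HasDerivAt (fun y => (f y)⁻¹ʳ) (-((f x)⁻¹ʳ * f' * (f x)⁻¹ʳ)) x := by
  obtain ⟨u, hu⟩ := hx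
  have := (hu ▸ hasFDerivAt_ringInverse (𝕜 := 𝕜) u).comp_hasDerivAt x hf
  simpa [← hu, Ring.inverse_unit, Function.comp_def] using this

theorem hasDerivAt_ringInverse_mul_of_hasDerivAt_mul {a b Φ Ψ : 𝕜 → R} {t : 𝕜}
    (hΦ : HasDerivAt Φ (a t * Φ t) t) (hΨ : HasDerivAt Ψ (b t * Ψ t) t) (hΨt : IsUnit (Ψ t)) :
    HasDerivAt (fun r => (Ψ r)⁻¹ʳ * Φ r) ((Ψ t)⁻¹ʳ * (a t - b t) * Φ t) t := by
  refine ((hΨ.ringInverse hΨt).mul hΦ).congr_deriv ?_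
  rw [mul_assoc _ (b t * Ψ t), mul_assoc (b t), Ring.mul_inverse_cancel _ hΨt]
  noncomm_ring

end RingInverse

theorem mul_ringInverse_sub_mul_ringInverse_eq_integral {R : Type*} [NormedRing R]
    [NormedAlgebra ℝ R] [CompleteSpace R] {a b Φ Ψ : ℝ → R} (ha : Continuous a)
    (hb : Continuous b) (hΦ : ∀ t, HasDerivAt Φ (a t * Φ t) t)
    (hΨ : ∀ t, HasDerivAt Ψ (b t * Ψ t) t) (hΨu : ∀ t, IsUnit (Ψ t)) {s : ℝ}
    (hΦs : IsUnit (Φ s)) (t : ℝ) :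
    Φ t * (Φ s)⁻¹ʳ - Ψ t * (Ψ s)⁻¹ʳ =
      ∫ r in s..t, Ψ t * (Ψ r)⁻¹ʳ * (a r - b r) * (Φ r * (Φ s)⁻¹ʳ) := by
  have hF : ∀ r, HasDerivAt (fun r => Ψ t * ((Ψ r)⁻¹ʳ * Φ r) * (Φ s)⁻¹ʳ)
      (Ψ t * ((Ψ r)⁻¹ʳ * (a r - b r) * Φ r) * (Φ s)⁻¹ʳ) r := fun r =>
    ((hasDerivAt_ringInverse_mul_of_hasDerivAt_mul (hΦ r) (hΨ r) (hΨu r)).const_mul _).mul_const _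
  have hΨinv : Continuous fun r => (Ψ r)⁻¹ʳ :=
    continuous_iff_continuousAt.2 fun r => ((hΨ r).ringInverse (hΨu r)).continuousAt
  have hΦc : Continuous Φ := continuous_iff_continuousAt.2 fun r => (hΦ r).continuousAt
  have hFTC := intervalIntegral.integral_eq_sub_of_hasDerivAt (fun r _ => hF r)
    ((by fun_prop : Continuous _).intervalIntegrable s t)
  simp only [mul_assoc] at hFTC ⊢
  rw [hFTC, Ring.mul_inverse_cancel_left _ _ (hΨu t), Ring.mul_inverse_cancel _ hΦs, mul_one]

namespace IsFundamentalMatrix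

variable {p : ℕ} {A B ΦA ΦB : ℝ → Matrix (Fin p) (Fin p) ℂ}

theorem comp_add_const (hΦA : IsFundamentalMatrix A ΦA) (ξ : ℝ) :
    IsFundamentalMatrix (fun r => A (r + ξ)) (fun r => ΦA (r + ξ)) :=
  ⟨fun r => (hΦA.1 (r + ξ)).comp_add_const r ξ, fun r => hΦA.2 (r + ξ)⟩

theorem mul_inv_sub_mul_inv_eq_integral (hA : Continuous A) (hB : Continuous B)
    (hΦA : IsFundamentalMatrix A ΦA) (hΦB : IsFundamentalMatrix B ΦB) (t s : ℝ) :
    ΦA t * (ΦA s)⁻¹ - ΦB t * (ΦB s)⁻¹ =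
      ∫ r in s..t, ΦB t * (ΦB r)⁻¹ * (A r - B r) * (ΦA r * (ΦA s)⁻¹) := by
  simpa only [Matrix.nonsing_inv_eq_ringInverse] using
    mul_ringInverse_sub_mul_ringInverse_eq_integral hA hB hΦA.1 hΦB.1 hΦB.2 (hΦA.2 s) t

end IsFundamentalMatrix

theorem variation_of_parameters_identities {p : ℕ}
    (A B ΦA ΦB : ℝ → Matrix (Fin p) (Fin p) ℂ)
    (hA : Continuous A) (hB : Continuous B)
    (hΦA : IsFundamentalMatrix A ΦA) (hΦB : IsFundamentalMatrix B ΦB) :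
    (∀ t s : ℝ,
      ΦA t * (ΦA s)⁻¹ - ΦB t * (ΦB s)⁻¹ =
        ∫ r in s..t, ΦB t * (ΦB r)⁻¹ * (A r - B r) * (ΦA r * (ΦA s)⁻¹)) ∧
    (∀ t s ξ : ℝ,
      ΦA (t + ξ) * (ΦA (s + ξ))⁻¹ - ΦB t * (ΦB s)⁻¹ =
        ∫ r in s..t, ΦB t * (ΦB r)⁻¹ * (A (r + ξ) - B r) * (ΦA (r + ξ) * (ΦA (s + ξ))⁻¹)) :=
  ⟨hΦA.mul_inv_sub_mul_inv_eq_integral hA hB hΦB, fun t s ξ =>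
    (hΦA.comp_add_const ξ).mul_inv_sub_mul_inv_eq_integral (hA.comp (continuous_add_const ξ))
      hB hΦB t s⟩
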